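/- arXiv:2208.09604 — 2 statements merged into one kernel-verified Lean document; each statement's English description precedes it below -/
import Mathlib

section
/- Let α, β, γ, δ ∈ (0, 2π). Then (e^{iα} - 1)(e^{iδ} - 1) = (e^{iβ} - 1)(e^{iγ} - 1) holds if and only if (α, δ) = (β, γ) or (α, δ) = (γ, β). -/
/-!
Since `e^{iθ} - 1 = 2 sin(θ/2) · i e^{iθ/2}` and `sin(θ/2) > 0` on `(0, 2π)`, each side is a
positive real times `e^{iφ}` with `φ = (α + δ)/2 - π`, resp. `(β + γ)/2 - π`, in `(-π, π)`.
Comparing moduli and arguments gives `sin(α/2) sin(δ/2) = sin(β/2) sin(γ/2)` and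
`α + δ = β + γ`. As `2 sin x sin y = cos (x - y) - cos (x + y)`, the half-angle differences then
have equal cosines, so `|α - δ| = |β - γ|`, which together with the equal sums pins down the pairs.
-/

open Real

namespace Complex

theorem exp_mul_I_sub_one (θ : ℝ) :
    exp (θ * I) - 1 = (2 * Real.sin (θ / 2) : ℝ) * I * exp ((θ / 2 : ℝ) * I) := by
  have hθ : exp (θ * I) = exp ((θ / 2 : ℝ) * I) ^ 2 := by
    rw [← exp_nat_mul]; push_cast; ring_nf
  rw [hθ, exp_mul_I]
  push_cast
  linear_combination sin_sq_add_cos_sq ((θ : ℂ) / 2) - sin ((θ : ℂ) / 2) ^ 2 * I_sq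

-- `I * I = exp (-π * I)` is absorbed into the exponential so that the angle lands in `Ioc (-π) π`.
theorem exp_mul_I_sub_one_mul_exp_mul_I_sub_one (a b : ℝ) :
    (exp (a * I) - 1) * (exp (b * I) - 1) =
      (4 * Real.sin (a / 2) * Real.sin (b / 2) : ℝ) * exp (((a + b) / 2 - π : ℝ) * I) := by
  have hexp : exp (((a + b) / 2 - π : ℝ) * I) =
      -(exp ((a / 2 : ℝ) * I) * exp ((b / 2 : ℝ) * I)) := by
    rw [← exp_add, ofReal_sub, sub_mul, exp_sub, exp_pi_mul_I]
    push_cast; ring_nf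
  rw [exp_mul_I_sub_one, exp_mul_I_sub_one, hexp]
  push_cast
  linear_combination (4 * sin ((a : ℂ) / 2) * sin ((b : ℂ) / 2) *
    exp ((a : ℂ) / 2 * I) * exp ((b : ℂ) / 2 * I)) * I_sq

theorem arg_ofReal_mul_exp_mul_I {r θ : ℝ} (hr : 0 < r) (hθ : θ ∈ Set.Ioc (-π) π) :
    arg (r * exp (θ * I)) = θ := by
  rw [arg_real_mul _ hr, arg_exp_mul_I, toIocMod_eq_self]
  simpa [sub_eq_add_neg, two_mul, ← add_assoc] using hθ

theorem ofReal_mul_exp_mul_I_injective {r s φ ψ : ℝ} (hr : 0 < r) (hs : 0 < s)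
    (hφ : φ ∈ Set.Ioc (-π) π) (hψ : ψ ∈ Set.Ioc (-π) π)
    (h : (r : ℂ) * exp (φ * I) = s * exp (ψ * I)) : r = s ∧ φ = ψ := by
  constructor
  · simpa [norm_mul, norm_exp_ofReal_mul_I, abs_of_pos hr, abs_of_pos hs] using congrArg norm h
  · rw [← arg_ofReal_mul_exp_mul_I hr hφ, ← arg_ofReal_mul_exp_mul_I hs hψ, h]

end Complex

theorem Real.eq_pair_of_add_eq_of_sin_mul_sin_eq {x y u v : ℝ} (hsum : x + y = u + v)
    (hxy : |x - y| ≤ π) (huv : |u - v| ≤ π)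
    (h : Real.sin x * Real.sin y = Real.sin u * Real.sin v) :
    (x = u ∧ y = v) ∨ (x = v ∧ y = u) := by
  have hcos : cos |x - y| = cos |u - v| := by
    rw [cos_abs, cos_abs]
    linarith [cos_sub x y, cos_add x y, cos_sub u v, cos_add u v, congrArg cos hsum]
  rcases abs_eq_abs.mp (injOn_cos ⟨abs_nonneg _, hxy⟩ ⟨abs_nonneg _, huv⟩ hcos) with hd | hd
  · exact .inl ⟨by linarith, by linarith⟩
  · exact .inr ⟨by linarith, by linarith⟩

theorem stmt_0 (α β γ δ : ℝ)
    (hα : α ∈ Set.Ioo 0 (2 * π)) (hβ : β ∈ Set.Ioo 0 (2 * π))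
    (hγ : γ ∈ Set.Ioo 0 (2 * π)) (hδ : δ ∈ Set.Ioo 0 (2 * π)) :
    (Complex.exp (α * Complex.I) - 1) * (Complex.exp (δ * Complex.I) - 1) =
      (Complex.exp (β * Complex.I) - 1) * (Complex.exp (γ * Complex.I) - 1) ↔
    (α = β ∧ δ = γ) ∨ (α = γ ∧ δ = β) := by
  obtain ⟨hα0, hα1⟩ := hα
  obtain ⟨hβ0, hβ1⟩ := hβ
  obtain ⟨hγ0, hγ1⟩ := hγ
  obtain ⟨hδ0, hδ1⟩ := hδ
  have sin_half_pos {θ : ℝ} (h0 : 0 < θ) (h1 : θ < 2 * π) : 0 < Real.sin (θ / 2) :=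
    sin_pos_of_pos_of_lt_pi (by linarith) (by linarith)
  constructor
  · intro h
    rw [Complex.exp_mul_I_sub_one_mul_exp_mul_I_sub_one,
      Complex.exp_mul_I_sub_one_mul_exp_mul_I_sub_one] at h
    obtain ⟨hmod, harg⟩ := Complex.ofReal_mul_exp_mul_I_injective
      (by have := sin_half_pos hα0 hα1; have := sin_half_pos hδ0 hδ1; positivity)
      (by have := sin_half_pos hβ0 hβ1; have := sin_half_pos hγ0 hγ1; positivity)
      ⟨by linarith, by linarith⟩ ⟨by linarith, by linarith⟩ h
    rcases Real.eq_pair_of_add_eq_of_sin_mul_sin_eq (x := α / 2) (y := δ / 2) (u := β / 2)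
      (v := γ / 2) (by linarith) (abs_le.mpr ⟨by linarith, by linarith⟩)
      (abs_le.mpr ⟨by linarith, by linarith⟩) (by linarith) with ⟨h1, h2⟩ | ⟨h1, h2⟩
    · exact .inl ⟨by linarith, by linarith⟩
    · exact .inr ⟨by linarith, by linarith⟩
  · rintro (⟨rfl, rfl⟩ | ⟨rfl, rfl⟩)
    · rfl
    · exact mul_comm _ _
end

section
/- Let α, β, γ, δ ∈ (0, π/2). If cos α · cos δ = cos β · cos γ and sin α · sin δ = sin β · sin γ, then either (α = β and γ = δ) or (α = γ and β = δ). -/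
/-! By the addition formulas the hypotheses say exactly that `cos (α + δ) = cos (β + γ)` and
`cos (α - δ) = cos (β - γ)`. Since cosine is injective on `[0, π]`, this gives `α + δ = β + γ`
and `|α - δ| = |β - γ|`; the two signs in the latter are the two alternatives of the conclusion. -/

open Real

lemma Real.abs_eq_abs_of_cos_eq {x y : ℝ} (hx : |x| ≤ π) (hy : |y| ≤ π)
    (h : cos x = cos y) : |x| = |y| :=
  injOn_cos ⟨abs_nonneg x, hx⟩ ⟨abs_nonneg y, hy⟩ (by rwa [cos_abs, cos_abs])

theorem stmt_1 (α β γ δ : ℝ)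
    (hα : α ∈ Set.Ioo 0 (π / 2)) (hβ : β ∈ Set.Ioo 0 (π / 2))
    (hγ : γ ∈ Set.Ioo 0 (π / 2)) (hδ : δ ∈ Set.Ioo 0 (π / 2))
    (h1 : Real.cos α * Real.cos δ = Real.cos β * Real.cos γ)
    (h2 : Real.sin α * Real.sin δ = Real.sin β * Real.sin γ) :
    (α = β ∧ γ = δ) ∨ (α = γ ∧ β = δ) := by
  obtain ⟨hα₀, hα₁⟩ := hα
  obtain ⟨hβ₀, hβ₁⟩ := hβ
  obtain ⟨hγ₀, hγ₁⟩ := hγ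
  obtain ⟨hδ₀, hδ₁⟩ := hδ
  have h_sum : α + δ = β + γ :=
    injOn_cos ⟨by linarith, by linarith⟩ ⟨by linarith, by linarith⟩
      (by rw [cos_add, cos_add, h1, h2])
  have h_diff : |α - δ| = |β - γ| :=
    abs_eq_abs_of_cos_eq (abs_le.2 ⟨by linarith, by linarith⟩)
      (abs_le.2 ⟨by linarith, by linarith⟩) (by rw [cos_sub, cos_sub, h1, h2])
  rcases abs_eq_abs.1 h_diff with h | h
  · exact .inl ⟨by linarith, by linarith⟩
  · exact .inr ⟨by linarith, by linarith⟩
end
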